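/- Let K': ℝ² → ℝ be a function satisfying |K'(z) - K'(w)| ≲ ‖z-w‖^θ (‖z‖^{-2-θ} + ‖w‖^{-2-θ}) for all θ ∈ (0,1]. Let α ∈ (-1,0) and η ∈ (0, 1+α). Then ∫_{ℝ²} |K'(u - w) - K'(-w)| · ‖w‖^α dw ≲ ‖u‖^η uniformly over u ∈ ℝ², where implicitly the integrand is supported in a fixed compact set (‖w‖, ‖u-w‖ ≤ C). -/

import Mathlib

/-!
Take the Hölder bound with `θ = η`: as `(u - w) - (-w) = u`, it gives
`|K'(u-w) - K'(-w)| ≤ C ‖u‖^η (‖u-w‖^{-2-η} + ‖w‖^{-2-η})`. After multiplying by `‖w‖^α`, the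
weight is absorbed into the larger of the two singular factors, leaving `‖w‖^β + ‖u-w‖^β` with
`β = α - 2 - η ∈ (-3, -2)`. This is integrable on parabolic balls because the parabolic dimension
of `ℝ²` is `3`: `‖(t,x)‖^β ≤ |t|^{β/3} |x|^{β/3}`, and `|t|^{β/3}` is locally integrable on `ℝ`.
-/

open MeasureTheory Real

/-- The parabolic norm `‖(t,x)‖ = √|t| + |x|` on `ℝ²`. -/
noncomputable def pnorm (z : ℝ × ℝ) : ℝ := Real.sqrt |z.1| + |z.2|

open scoped ENNReal

lemma pnorm_nonneg (z : ℝ × ℝ) : 0 ≤ pnorm z :=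
  add_nonneg (Real.sqrt_nonneg _) (abs_nonneg _)

lemma pnorm_pos {z : ℝ × ℝ} (hz : z ≠ 0) : 0 < pnorm z := by
  rcases ne_or_eq z.1 0 with h1 | h1
  · exact add_pos_of_pos_of_nonneg (Real.sqrt_pos.2 (abs_pos.2 h1)) (abs_nonneg _)
  · have h2 : z.2 ≠ 0 := fun h2 => hz (Prod.ext h1 h2)
    exact add_pos_of_nonneg_of_pos (Real.sqrt_nonneg _) (abs_pos.2 h2)

@[simp]
lemma pnorm_neg (z : ℝ × ℝ) : pnorm (-z) = pnorm z := by
  simp [pnorm]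

@[fun_prop]
lemma continuous_pnorm : Continuous pnorm := by
  unfold pnorm; fun_prop

lemma rpow_pnorm_le_abs_rpow_mul_abs_rpow {β : ℝ} (hβ : β ≤ 0) {w : ℝ × ℝ}
    (h1 : w.1 ≠ 0) (h2 : w.2 ≠ 0) :
    pnorm w ^ β ≤ |w.1| ^ (β / 3) * |w.2| ^ (β / 3) := by
  have hs : 0 < Real.sqrt |w.1| := Real.sqrt_pos.2 (abs_pos.2 h1)
  have hx : 0 < |w.2| := abs_pos.2 h2
  have hw : 0 < pnorm w := pnorm_pos fun h => h1 (by simp [h])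
  calc pnorm w ^ β = pnorm w ^ (2 * β / 3) * pnorm w ^ (β / 3) := by
        rw [← Real.rpow_add hw]; ring_nf
    _ ≤ Real.sqrt |w.1| ^ (2 * β / 3) * |w.2| ^ (β / 3) := by
        refine mul_le_mul ?_ ?_ (Real.rpow_nonneg hw.le _) (Real.rpow_nonneg hs.le _)
        · exact Real.rpow_le_rpow_of_nonpos hs (le_add_of_nonneg_right (abs_nonneg _)) (by linarith)
        · exact Real.rpow_le_rpow_of_nonpos hx (le_add_of_nonneg_left (Real.sqrt_nonneg _))
            (by linarith)
    _ = |w.1| ^ (β / 3) * |w.2| ^ (β / 3) := by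
        rw [Real.sqrt_eq_rpow, ← Real.rpow_mul (abs_nonneg _)]; ring_nf

lemma locallyIntegrable_abs_rpow {r : ℝ} (hr : -1 < r) :
    LocallyIntegrable (fun t : ℝ => |t| ^ r) := by
  refine locallyIntegrable_of_norm_le_rpow (C := 1) (α := -r) (by simp) (by simp; linarith)
    (Filter.Eventually.of_forall fun t => ?_) (by fun_prop : Measurable _).aestronglyMeasurable
  simp [abs_of_nonneg (Real.rpow_nonneg (abs_nonneg t) r)]

lemma integrableOn_pnorm_rpow {β : ℝ} (hβ : -3 < β) (hβ0 : β ≤ 0) (R : ℝ) :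
    IntegrableOn (fun w => pnorm w ^ β) {w | pnorm w ≤ R} := by
  set box : Set (ℝ × ℝ) := Set.Icc (-R ^ 2) (R ^ 2) ×ˢ Set.Icc (-R) R
  have hsub : {w : ℝ × ℝ | pnorm w ≤ R} ⊆ box := by
    intro w (hw : Real.sqrt |w.1| + |w.2| ≤ R)
    have h1 : Real.sqrt |w.1| ≤ R := by linarith [abs_nonneg w.2]
    have h2 : |w.2| ≤ R := by linarith [Real.sqrt_nonneg |w.1|]
    refine ⟨abs_le.1 ?_, abs_le.1 h2⟩
    calc |w.1| = Real.sqrt |w.1| ^ 2 := (Real.sq_sqrt (abs_nonneg _)).symm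
      _ ≤ R ^ 2 := by gcongr
  have hg := locallyIntegrable_abs_rpow (r := β / 3) (by linarith)
  have hprod : IntegrableOn (fun w : ℝ × ℝ => |w.1| ^ (β / 3) * |w.2| ^ (β / 3)) box := by
    rw [IntegrableOn, Measure.volume_eq_prod, ← Measure.prod_restrict]
    exact (hg.integrableOn_isCompact isCompact_Icc).mul_prod
      (hg.integrableOn_isCompact isCompact_Icc)
  have hnull : ∀ᵐ w : ℝ × ℝ, w.1 ≠ 0 ∧ w.2 ≠ 0 := by
    rw [Measure.volume_eq_prod]
    exact (Measure.quasiMeasurePreserving_fst.ae (Measure.ae_ne volume 0)).and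
      (Measure.quasiMeasurePreserving_snd.ae (Measure.ae_ne volume 0))
  have hbox : IntegrableOn (fun w => pnorm w ^ β) box := by
    refine hprod.mono' (by fun_prop : Measurable _).aestronglyMeasurable (ae_restrict_of_ae ?_)
    filter_upwards [hnull] with w ⟨h1, h2⟩
    rw [Real.norm_of_nonneg (Real.rpow_nonneg (pnorm_nonneg w) β)]
    exact rpow_pnorm_le_abs_rpow_mul_abs_rpow hβ0 h1 h2
  exact hbox.mono_set hsub

lemma rpow_mul_rpow_le_rpow_add_add_rpow_add {a b γ α : ℝ} (ha : 0 < a) (hb : 0 < b)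
    (hγ : γ ≤ 0) (hα : α ≤ 0) :
    a ^ γ * b ^ α ≤ a ^ (γ + α) + b ^ (γ + α) := by
  rcases le_total a b with hab | hba
  · calc a ^ γ * b ^ α ≤ a ^ γ * a ^ α :=
          mul_le_mul_of_nonneg_left (Real.rpow_le_rpow_of_nonpos ha hab hα) (by positivity)
      _ = a ^ (γ + α) := (Real.rpow_add ha _ _).symm
      _ ≤ a ^ (γ + α) + b ^ (γ + α) := le_add_of_nonneg_right (by positivity)
  · calc a ^ γ * b ^ α ≤ b ^ γ * b ^ α :=
          mul_le_mul_of_nonneg_right (Real.rpow_le_rpow_of_nonpos hb hba hγ) (by positivity)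
      _ = b ^ (γ + α) := (Real.rpow_add hb _ _).symm
      _ ≤ a ^ (γ + α) + b ^ (γ + α) := le_add_of_nonneg_left (by positivity)

lemma abs_sub_mul_rpow_le {K' : ℝ × ℝ → ℝ} {C θ α : ℝ}
    (hK : ∀ z w : ℝ × ℝ, z ≠ 0 → w ≠ 0 →
      |K' z - K' w| ≤ C * pnorm (z - w) ^ θ * (pnorm z ^ (-2 - θ) + pnorm w ^ (-2 - θ)))
    (hC : 0 ≤ C) (hθ : -2 ≤ θ) (hα : α ≤ 0) {u w : ℝ × ℝ} (hw : w ≠ 0) (hwu : w ≠ u) :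
    |K' (u - w) - K' (-w)| * pnorm w ^ α ≤
      C * pnorm u ^ θ * (2 * pnorm w ^ (α - 2 - θ) + pnorm (u - w) ^ (α - 2 - θ)) := by
  have huw : u - w ≠ 0 := sub_ne_zero.2 hwu.symm
  have hKuw := hK (u - w) (-w) huw (neg_ne_zero.2 hw)
  rw [sub_neg_eq_add, sub_add_cancel, pnorm_neg] at hKuw
  have hw' := pnorm_pos hw
  have hmixed := rpow_mul_rpow_le_rpow_add_add_rpow_add (pnorm_pos huw) hw'
    (by linarith : -2 - θ ≤ 0) hα
  have hsame : pnorm w ^ (-2 - θ) * pnorm w ^ α = pnorm w ^ (α - 2 - θ) := by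
    rw [← Real.rpow_add hw']; ring_nf
  have hexp : -2 - θ + α = α - 2 - θ := by ring
  rw [hexp] at hmixed
  calc |K' (u - w) - K' (-w)| * pnorm w ^ α
      ≤ C * pnorm u ^ θ * (pnorm (u - w) ^ (-2 - θ) + pnorm w ^ (-2 - θ)) * pnorm w ^ α :=
        mul_le_mul_of_nonneg_right hKuw (by positivity)
    _ = C * pnorm u ^ θ * (pnorm (u - w) ^ (-2 - θ) * pnorm w ^ α
          + pnorm w ^ (-2 - θ) * pnorm w ^ α) := by ring
    _ ≤ C * pnorm u ^ θ * (2 * pnorm w ^ (α - 2 - θ) + pnorm (u - w) ^ (α - 2 - θ)) := by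
        have hCu : 0 ≤ C * pnorm u ^ θ := mul_nonneg hC (Real.rpow_nonneg (pnorm_nonneg u) θ)
        exact mul_le_mul_of_nonneg_left (by linarith) hCu

lemma setLIntegral_two_mul_add_sub_le (u : ℝ × ℝ) (β R : ℝ) :
    ∫⁻ w in {w : ℝ × ℝ | pnorm w ≤ R ∧ pnorm (u - w) ≤ R},
        (2 * ENNReal.ofReal (pnorm w ^ β) + ENNReal.ofReal (pnorm (u - w) ^ β)) ≤
      3 * ∫⁻ w in {w : ℝ × ℝ | pnorm w ≤ R}, ENNReal.ofReal (pnorm w ^ β) := by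
  set M := ∫⁻ w in {w : ℝ × ℝ | pnorm w ≤ R}, ENNReal.ofReal (pnorm w ^ β)
  have hreflect : ∫⁻ w in {w : ℝ × ℝ | pnorm (u - w) ≤ R}, ENNReal.ofReal (pnorm (u - w) ^ β) = M :=
    (Measure.measurePreserving_sub_left volume u).setLIntegral_comp_preimage_emb
      (MeasurableEquiv.subLeft u).measurableEmbedding
      (fun v => ENNReal.ofReal (pnorm v ^ β)) {v | pnorm v ≤ R}
  have hmeas : Measurable fun w => ENNReal.ofReal (pnorm w ^ β) := by fun_prop
  rw [lintegral_add_left (hmeas.const_mul 2), lintegral_const_mul' 2 _ (by norm_num)]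
  calc _ ≤ 2 * M + M := by
        gcongr
        · exact lintegral_mono_set fun w hw => hw.1
        · exact hreflect ▸ lintegral_mono_set fun w hw => hw.2
    _ = 3 * M := by ring

lemma setLIntegral_abs_sub_mul_rpow_le {K' : ℝ × ℝ → ℝ} {C θ α : ℝ}
    (hK : ∀ z w : ℝ × ℝ, z ≠ 0 → w ≠ 0 →
      |K' z - K' w| ≤ C * pnorm (z - w) ^ θ * (pnorm z ^ (-2 - θ) + pnorm w ^ (-2 - θ)))
    (hC : 0 ≤ C) (hθ : -2 ≤ θ) (hα : α ≤ 0) (u : ℝ × ℝ) (R : ℝ) :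
    ∫⁻ w in {w : ℝ × ℝ | pnorm w ≤ R ∧ pnorm (u - w) ≤ R},
        ENNReal.ofReal (|K' (u - w) - K' (-w)| * pnorm w ^ α) ≤
      ENNReal.ofReal (C * pnorm u ^ θ) *
        (3 * ∫⁻ w in {w : ℝ × ℝ | pnorm w ≤ R}, ENNReal.ofReal (pnorm w ^ (α - 2 - θ))) := by
  set β := α - 2 - θ
  have hCu : 0 ≤ C * pnorm u ^ θ := mul_nonneg hC (Real.rpow_nonneg (pnorm_nonneg u) θ)
  calc _ ≤ ∫⁻ w in {w : ℝ × ℝ | pnorm w ≤ R ∧ pnorm (u - w) ≤ R}, ENNReal.ofReal (C * pnorm u ^ θ) *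
          (2 * ENNReal.ofReal (pnorm w ^ β) + ENNReal.ofReal (pnorm (u - w) ^ β)) := by
        refine lintegral_mono_ae (ae_restrict_of_ae ?_)
        filter_upwards [Measure.ae_ne volume 0, Measure.ae_ne volume u] with w hw hwu
        have hw' := Real.rpow_nonneg (pnorm_nonneg w) β
        rw [← ENNReal.ofReal_ofNat 2, ← ENNReal.ofReal_mul zero_le_two,
          ← ENNReal.ofReal_add (by positivity) (Real.rpow_nonneg (pnorm_nonneg _) β),
          ← ENNReal.ofReal_mul hCu]
        exact ENNReal.ofReal_le_ofReal (abs_sub_mul_rpow_le hK hC hθ hα hw hwu)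
    _ = ENNReal.ofReal (C * pnorm u ^ θ) * ∫⁻ w in {w : ℝ × ℝ | pnorm w ≤ R ∧ pnorm (u - w) ≤ R},
          (2 * ENNReal.ofReal (pnorm w ^ β) + ENNReal.ofReal (pnorm (u - w) ^ β)) :=
        lintegral_const_mul' _ _ ENNReal.ofReal_ne_top
    _ ≤ _ := by gcongr; exact setLIntegral_two_mul_add_sub_le u β R

theorem stmt12_general (K' : ℝ × ℝ → ℝ)
    (hK : ∀ θ : ℝ, θ ∈ Set.Ioc (0:ℝ) 1 → ∃ Cθ : ℝ, 0 < Cθ ∧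
      ∀ z w : ℝ × ℝ, z ≠ 0 → w ≠ 0 →
        |K' z - K' w| ≤ Cθ * pnorm (z - w) ^ θ * (pnorm z ^ (-2 - θ) + pnorm w ^ (-2 - θ)))
    (α η R : ℝ) (hα : α ∈ Set.Ioo (-1 : ℝ) 0) (hη : η ∈ Set.Ioo (0:ℝ) (1 + α)) :
    ∃ C : ℝ, 0 < C ∧ ∀ u : ℝ × ℝ,
      ∫⁻ w in {w : ℝ × ℝ | pnorm w ≤ R ∧ pnorm (u - w) ≤ R},
        ENNReal.ofReal (|K' (u - w) - K' (-w)| * pnorm w ^ α) ≤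
        ENNReal.ofReal (C * pnorm u ^ η) := by
  obtain ⟨hα₁, hα₂⟩ := hα
  obtain ⟨hη₁, hη₂⟩ := hη
  obtain ⟨Cη, hCη, hKη⟩ := hK η ⟨hη₁, by linarith⟩
  set M := ∫⁻ w in {w : ℝ × ℝ | pnorm w ≤ R}, ENNReal.ofReal (pnorm w ^ (α - 2 - η))
  have hM : M ≠ ∞ :=
    (integrableOn_pnorm_rpow (by linarith) (by linarith) R).setLIntegral_lt_top.ne
  refine ⟨Cη * (3 * M.toReal + 1), by positivity, fun u => ?_⟩
  have hCu : 0 ≤ Cη * pnorm u ^ η := mul_nonneg hCη.le (Real.rpow_nonneg (pnorm_nonneg u) η)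
  calc _ ≤ ENNReal.ofReal (Cη * pnorm u ^ η) * (3 * M) :=
        setLIntegral_abs_sub_mul_rpow_le hKη hCη.le (by linarith) hα₂.le u R
    _ = ENNReal.ofReal (Cη * pnorm u ^ η * (3 * M.toReal)) := by
        rw [ENNReal.ofReal_mul hCu, ENNReal.ofReal_mul zero_le_three, ENNReal.ofReal_ofNat,
          ENNReal.ofReal_toReal hM]
    _ ≤ ENNReal.ofReal (Cη * (3 * M.toReal + 1) * pnorm u ^ η) :=
        ENNReal.ofReal_le_ofReal (by linarith)

/-- If `K'` satisfies `|K'(z)-K'(w)| ≲_θ ‖z-w‖^θ (‖z‖^{-2-θ}+‖w‖^{-2-θ})` for all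
`θ ∈ (0,1]`, `α ∈ (-1,0)` and `η ∈ (0,1+α)`, then
`∫ |K'(u-w)-K'(-w)| ‖w‖^α dw ≲ ‖u‖^η` uniformly over `u`, the integral being
restricted to a fixed compact region `‖w‖, ‖u-w‖ ≤ R`. -/
theorem stmt12 (K' : ℝ × ℝ → ℝ)
    (hK : ∀ θ : ℝ, θ ∈ Set.Ioc (0:ℝ) 1 → ∃ Cθ : ℝ, 0 < Cθ ∧
      ∀ z w : ℝ × ℝ, z ≠ 0 → w ≠ 0 →
        |K' z - K' w| ≤ Cθ * pnorm (z - w) ^ θ * (pnorm z ^ (-2 - θ) + pnorm w ^ (-2 - θ)))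
    (α η R : ℝ) (hα : α ∈ Set.Ioo (-1 : ℝ) 0) (hη : η ∈ Set.Ioo (0:ℝ) (1 + α)) (hR : 0 < R) :
    ∃ C : ℝ, 0 < C ∧ ∀ u : ℝ × ℝ,
      ∫⁻ w in {w : ℝ × ℝ | pnorm w ≤ R ∧ pnorm (u - w) ≤ R},
        ENNReal.ofReal (|K' (u - w) - K' (-w)| * pnorm w ^ α) ≤
        ENNReal.ofReal (C * pnorm u ^ η) :=
  stmt12_general K' hK α η R hα hη
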